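/- For the four-dimensional complex algebras B⁴₁₀ and B⁴₂₄(α) of the paper, dim (B⁴₁₀)² = 2 and dim (B⁴₂₄(α))² = 3 for all α ∈ ℂ. -/
import Mathlib

noncomputable def mB410 : (Fin 4 → ℂ) →ₗ[ℂ] (Fin 4 → ℂ) →ₗ[ℂ] (Fin 4 → ℂ) :=
  LinearMap.mk₂ ℂ (fun u v => ![0, 0, u 0 * v 1, u 0 * v 2 + u 1 * v 0 + u 2 * v 1])
    (fun x y v => by funext i; fin_cases i <;> simp <;> ring)
    (fun a x v => by funext i; fin_cases i <;> simp <;> ring)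
    (fun u x y => by funext i; fin_cases i <;> simp <;> ring)
    (fun u a x => by funext i; fin_cases i <;> simp <;> ring)

noncomputable def mB424 (α : ℂ) : (Fin 4 → ℂ) →ₗ[ℂ] (Fin 4 → ℂ) →ₗ[ℂ] (Fin 4 → ℂ) :=
  LinearMap.mk₂ ℂ (fun u v =>
      ![0, u 0 * v 0, u 0 * v 1 + α * (u 1 * v 0),
        u 0 * v 2 + α * (u 1 * v 1) + α * (u 2 * v 0)])
    (fun x y v => by funext i; fin_cases i <;> simp <;> ring)
    (fun a x v => by funext i; fin_cases i <;> simp <;> ring)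
    (fun u x y => by funext i; fin_cases i <;> simp <;> ring)
    (fun u a x => by funext i; fin_cases i <;> simp <;> ring)

/-- The square `A²` of an algebra: the span of all products. -/
noncomputable def sqr {V : Type*} [AddCommGroup V] [Module ℂ V]
    (μ : V →ₗ[ℂ] V →ₗ[ℂ] V) : Submodule ℂ V :=
  Submodule.span ℂ {w | ∃ u v, w = μ u v}

lemma li2 : LinearIndependent ℂ ![(Pi.single 2 1 : Fin 4 → ℂ), Pi.single 3 1] := by
  have h : ![(Pi.single 2 1 : Fin 4 → ℂ), Pi.single 3 1] =
      (Pi.basisFun ℂ (Fin 4)) ∘ ![2, 3] := by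
    funext i; fin_cases i <;> simp [Pi.basisFun_apply]
  rw [h]
  exact (Pi.basisFun ℂ (Fin 4)).linearIndependent.comp ![2,3] (by decide)

lemma li3 : LinearIndependent ℂ
    ![(Pi.single 1 1 : Fin 4 → ℂ), Pi.single 2 1, Pi.single 3 1] := by
  have h : ![(Pi.single 1 1 : Fin 4 → ℂ), Pi.single 2 1, Pi.single 3 1] =
      (Pi.basisFun ℂ (Fin 4)) ∘ ![1, 2, 3] := by
    funext i; fin_cases i <;> simp [Pi.basisFun_apply]
  rw [h]
  exact (Pi.basisFun ℂ (Fin 4)).linearIndependent.comp ![1,2,3] (by decide)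

lemma sqr410 : sqr mB410
    = Submodule.span ℂ (Set.range ![(Pi.single 2 1 : Fin 4 → ℂ), Pi.single 3 1]) := by
  apply le_antisymm
  · rw [sqr, Submodule.span_le]
    rintro w ⟨u, v, rfl⟩
    have : mB410 u v = (u 0 * v 1) • (Pi.single 2 1 : Fin 4 → ℂ)
        + (u 0 * v 2 + u 1 * v 0 + u 2 * v 1) • (Pi.single 3 1 : Fin 4 → ℂ) := by
      funext i; fin_cases i <;> simp [mB410]
    rw [this]
    exact Submodule.add_mem _
      (Submodule.smul_mem _ _ (Submodule.subset_span ⟨0, rfl⟩))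
      (Submodule.smul_mem _ _ (Submodule.subset_span ⟨1, rfl⟩))
  · rw [Submodule.span_le]
    rintro w ⟨i, rfl⟩
    fin_cases i
    · refine Submodule.subset_span ⟨Pi.single 0 1, Pi.single 1 1, ?_⟩
      funext j; fin_cases j <;> simp [mB410, Pi.single_apply]
    · refine Submodule.subset_span ⟨Pi.single 1 1, Pi.single 0 1, ?_⟩
      funext j; fin_cases j <;> simp [mB410, Pi.single_apply]

lemma sqr424 (α : ℂ) : sqr (mB424 α) = Submodule.span ℂ
    (Set.range ![(Pi.single 1 1 : Fin 4 → ℂ), Pi.single 2 1, Pi.single 3 1]) := by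
  apply le_antisymm
  · rw [sqr, Submodule.span_le]
    rintro w ⟨u, v, rfl⟩
    have : mB424 α u v = (u 0 * v 0) • (Pi.single 1 1 : Fin 4 → ℂ)
        + (u 0 * v 1 + α * (u 1 * v 0)) • (Pi.single 2 1 : Fin 4 → ℂ)
        + (u 0 * v 2 + α * (u 1 * v 1) + α * (u 2 * v 0)) • (Pi.single 3 1 : Fin 4 → ℂ) := by
      funext i; fin_cases i <;> simp [mB424]
    rw [this]
    exact Submodule.add_mem _
      (Submodule.add_mem _
        (Submodule.smul_mem _ _ (Submodule.subset_span ⟨0, rfl⟩))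
        (Submodule.smul_mem _ _ (Submodule.subset_span ⟨1, rfl⟩)))
      (Submodule.smul_mem _ _ (Submodule.subset_span ⟨2, rfl⟩))
  · rw [Submodule.span_le]
    rintro w ⟨i, rfl⟩
    fin_cases i
    · refine Submodule.subset_span ⟨Pi.single 0 1, Pi.single 0 1, ?_⟩
      funext j; fin_cases j <;> simp [mB424, Pi.single_apply, Matrix.vecHead, Matrix.vecTail]
    · refine Submodule.subset_span ⟨Pi.single 0 1, Pi.single 1 1, ?_⟩
      funext j; fin_cases j <;> simp [mB424, Pi.single_apply, Matrix.vecHead, Matrix.vecTail]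
    · refine Submodule.subset_span ⟨Pi.single 0 1, Pi.single 2 1, ?_⟩
      funext j; fin_cases j <;> simp [mB424, Pi.single_apply, Matrix.vecHead, Matrix.vecTail]

/-- `dim (B⁴₁₀)² = 2` while `dim (B⁴₂₄(α))² = 3` for all `α`. -/
theorem squares_dim :
    Module.finrank ℂ (sqr mB410) = 2 ∧
      ∀ α : ℂ, Module.finrank ℂ (sqr (mB424 α)) = 3 := by
  constructor
  · rw [sqr410, finrank_span_eq_card li2]; simp
  · intro α
    rw [sqr424 α, finrank_span_eq_card li3]; simp
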